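/- Let L be a fixed even integer with L ≥ 6, let n ≥ 1, and let μ be a probability measure on ℝ^n satisfying Condition H(n). Let W = ⟨ζ^(0)|ζ^(1)|⋯|ζ^(L−1)⟩ be an ℝ^{Ln}-valued random vector, where ζ^(0),…,ζ^(L−1) are independent ℝ^n-valued random vectors each with law μ. Then for every j ∈ {0,…,L−1}, the law of ψ_{n,j}(W) equals θ(μ). -/

import Mathlib

open MeasureTheory ProbabilityTheory Filter Topology
open scoped ENNReal NNReal

noncomputable section

/-- `λ_unps3`: the uniform distribution on the interval `[-√3, √3]`. -/
def lambdaUnps3 : Measure ℝ :=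
  (ENNReal.ofReal (2 * Real.sqrt 3))⁻¹ •
    (volume.restrict (Set.Icc (-(Real.sqrt 3)) (Real.sqrt 3)))

/-- A family of real random variables is `m`-tuplewise independent if every subfamily
indexed by a set of cardinality between 2 and `m` is independent. -/
def TuplewiseIndep {Ω ι : Type*} [MeasurableSpace Ω] (P : Measure Ω) (m : ℕ)
    (X : ι → Ω → ℝ) : Prop :=
  ∀ S : Finset ι, 2 ≤ S.card → S.card ≤ m →
    iIndepFun (m := fun _ : {i // i ∈ S} => Real.measurableSpace)
      (fun i : {i // i ∈ S} => X i) P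

/-- The map `φ_n : ℝ^n → ℝ^n`. -/
def phi (n : ℕ) (x : Fin n → ℝ) : Fin n → ℝ :=
  if 0 < ∑ i, x i then x else if (∑ i, x i) = 0 then 0 else -x

/-- Splicing `L` blocks of length `n` into one vector of length `L * n`:
block `ℓ` occupies coordinates `ℓ*n, …, ℓ*n + n - 1`. -/
def splice {L n : ℕ} (x : Fin L → Fin n → ℝ) : Fin (L * n) → ℝ :=
  fun k => x (finProdFinEquiv.symm k).1 (finProdFinEquiv.symm k).2

/-- The map `ψ_{n,j} : ℝ^{Ln} → ℝ^{Ln}`: if the product of the block sums is positive,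
multiply block `j` by `-1`; otherwise do nothing. -/
def psi (L n : ℕ) (j : Fin L) (y : Fin (L * n) → ℝ) : Fin (L * n) → ℝ :=
  if 0 < ∏ ℓ : Fin L, ∑ i : Fin n, y (finProdFinEquiv (ℓ, i)) then
    fun k => if (finProdFinEquiv.symm k).1 = j then -y k else y k
  else y

/-- The set `Υ = {x ∈ {-1,1}^L : ∏ i, x i = -1}`. -/
def Upsilon (L : ℕ) : Set (Fin L → ℝ) :=
  {x | (∀ i, x i = 1 ∨ x i = -1) ∧ ∏ i, x i = -1}

/-- `ν`: the uniform distribution on `Υ`, i.e. `ν({x}) = 2^{-(L-1)}` for `x ∈ Υ`. -/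
def nuL (L : ℕ) : Measure (Fin L → ℝ) :=
  ((2 : ℝ≥0∞) ^ (L - 1))⁻¹ • (Measure.count.restrict (Upsilon L))

/-- `θ(μ)`: the law on `ℝ^{Ln}` of `⟨V_0 φ_n(W^(0)) | ⋯ | V_{L-1} φ_n(W^(L-1))⟩`,
where `W^(0), …, W^(L-1)` are i.i.d. with law `μ` and `V ~ ν` is independent of them. -/
def theta (L n : ℕ) (μ : Measure (Fin n → ℝ)) : Measure (Fin (L * n) → ℝ) :=
  Measure.map
    (fun p : (Fin L → ℝ) × (Fin L → (Fin n → ℝ)) =>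
      splice (fun ℓ => p.1 ℓ • phi n (p.2 ℓ)))
    ((nuL L).prod (Measure.pi fun _ : Fin L => μ))

/-- Condition `H(n)` for a probability measure `μ` on `ℝ^n` (with parameter `L`). -/
structure CondH (L n : ℕ) (μ : Measure (Fin n → ℝ)) : Prop where
  abs_cont : μ ≪ volume
  marginal : ∀ k : Fin n, Measure.map (fun x => x k) μ = lambdaUnps3
  tuplewise : TuplewiseIndep μ (L - 1) (fun k (x : Fin n → ℝ) => x k)
  abs_indep : 2 ≤ n → iIndepFun (m := fun _ : Fin n => Real.measurableSpace)
      (fun k (x : Fin n → ℝ) => |x k|) μ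
  neg_inv : Measure.map (fun x => -x) μ = μ
  perm : ∀ j : Fin n, ∃ σ : Equiv.Perm (Fin n),
      σ ⟨0, j.pos⟩ = j ∧ Measure.map (fun x => x ∘ σ) μ = μ
  prod_nonpos : L ≤ n → ∀ S : Finset (Fin n), S.card = L →
      (∫ x, ∏ i ∈ S, x i ∂μ) ≤ 0

/-- The recursively defined measures `μ_n` on `ℝ^{L^n}`:
`μ_0 = λ_unps3` and `μ_{n+1} = θ(μ_n)`. -/
def muSeq (L : ℕ) : (n : ℕ) → Measure (Fin (L ^ n) → ℝ)
  | 0 => Measure.map (fun x : ℝ => fun _ : Fin (L ^ 0) => x) lambdaUnps3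
  | n + 1 =>
    Measure.map
      (fun (x : Fin (L * L ^ n) → ℝ) (k : Fin (L ^ (n + 1))) =>
        x (Fin.cast (show L ^ (n + 1) = L * L ^ n by rw [pow_succ, Nat.mul_comm]) k))
      (theta L (L ^ n) (muSeq L n))

/-- `W = (W_k, k ∈ ℤ)` has law `D(n, μ)`: the successive length-`n` blocks
`(W_{nu}, …, W_{nu+n-1})`, `u ∈ ℤ`, are independent and each has law `μ`. -/
def HasLawD {Ω : Type*} [MeasurableSpace Ω] (P : Measure Ω) (n : ℕ)
    (μ : Measure (Fin n → ℝ)) (W : ℤ → Ω → ℝ) : Prop :=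
  iIndepFun (m := fun _ : ℤ => MeasurableSpace.pi)
      (fun (u : ℤ) (ω : Ω) => fun i : Fin n => W ((n : ℤ) * u + (i : ℤ)) ω) P ∧
    ∀ u : ℤ, Measure.map (fun ω => fun i : Fin n => W ((n : ℤ) * u + (i : ℤ)) ω) P = μ

/-- Strict stationarity of a sequence of real random variables indexed by `ℤ`. -/
def StrictlyStationary {Ω : Type*} [MeasurableSpace Ω] (P : Measure Ω)
    (X : ℤ → Ω → ℝ) : Prop :=
  ∀ (j ℓ : ℤ) (m : ℕ),
    Measure.map (fun ω => fun i : Fin (m + 1) => X (j + (i : ℤ)) ω) P =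
    Measure.map (fun ω => fun i : Fin (m + 1) => X (ℓ + (i : ℤ)) ω) P

/-- `J(n) = Σ_{u=1}^n L^{u-1} κ_u` (here `κ u` stands for the paper's `κ_{u+1}`). -/
def Jfun (L : ℕ) {Ω : Type*} (κ : ℕ → Ω → Fin L) (n : ℕ) (ω : Ω) : ℕ :=
  ∑ u ∈ Finset.range n, L ^ u * (κ u ω : ℕ)

end


noncomputable section StmtAux

/-- flip coordinate `j` if the product of the coordinates is positive. -/
def Tj {L : ℕ} (j : Fin L) (v : Fin L → ℝ) : Fin L → ℝ :=
  if 0 < ∏ ℓ, v ℓ then (fun ℓ => if ℓ = j then -v ℓ else v ℓ) else v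

def Phi {L n : ℕ} (p : (Fin L → ℝ) × (Fin L → Fin n → ℝ)) : Fin L → Fin n → ℝ :=
  fun ℓ => p.1 ℓ • p.2 ℓ

def cubeF (L : ℕ) : Finset (Fin L → ℝ) := Fintype.piFinset (fun _ => ({1, -1} : Finset ℝ))

def Bsum (L : ℕ) : Measure (Fin L → ℝ) :=
  ∑ v ∈ cubeF L, ((2:ℝ≥0∞)^L)⁻¹ • Measure.dirac v

def flipj {L : ℕ} (j : Fin L) (v : Fin L → ℝ) : Fin L → ℝ := fun ℓ => if ℓ = j then -v ℓ else v ℓ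

lemma measurable_sumcoord (n : ℕ) : Measurable (fun x : Fin n → ℝ => ∑ i, x i) :=
  Finset.measurable_sum _ fun i _ => measurable_pi_apply i

lemma measurable_phi (n : ℕ) : Measurable (phi n) := by
  unfold phi
  apply Measurable.ite (measurableSet_lt measurable_const (measurable_sumcoord n)) measurable_id
  exact Measurable.ite (measurableSet_eq_fun (measurable_sumcoord n) measurable_const)
    measurable_const measurable_id.neg

lemma measurable_splice {L n : ℕ} : Measurable (splice (L := L) (n := n)) := by
  apply measurable_pi_lambda
  intro k
  exact (measurable_pi_apply _).comp (measurable_pi_apply _)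

lemma measurable_psi (L n : ℕ) (j : Fin L) : Measurable (psi L n j) := by
  unfold psi
  apply Measurable.ite
  · apply measurableSet_lt measurable_const
    apply Finset.measurable_prod
    intro ℓ _
    apply Finset.measurable_sum
    intro i _
    apply measurable_pi_apply
  · apply measurable_pi_lambda
    intro k
    by_cases h : (finProdFinEquiv.symm k).1 = j
    · simp only [if_pos h]; apply Measurable.neg; apply measurable_pi_apply
    · simp only [if_neg h]; apply measurable_pi_apply
  · exact measurable_id

lemma measurable_Tj {L : ℕ} (j : Fin L) : Measurable (Tj j) := by
  unfold Tj
  apply Measurable.ite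
  · apply measurableSet_lt measurable_const
    apply Finset.measurable_prod
    intro ℓ _
    apply measurable_pi_apply
  · apply measurable_pi_lambda
    intro ℓ
    by_cases h : ℓ = j
    · simp only [if_pos h]; apply Measurable.neg; apply measurable_pi_apply
    · simp only [if_neg h]; apply measurable_pi_apply
  · exact measurable_id

lemma measurable_Phi {L n : ℕ} : Measurable (Phi (L := L) (n := n)) := by
  apply measurable_pi_lambda
  intro ℓ
  exact ((measurable_pi_apply ℓ).comp measurable_fst).smul
    ((measurable_pi_apply ℓ).comp measurable_snd)

lemma sumker_null (n : ℕ) (hn : 1 ≤ n) : (volume : Measure (Fin n → ℝ)) {x | ∑ i, x i = 0} = 0 := by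
  set f : (Fin n → ℝ) →ₗ[ℝ] ℝ := ∑ i, LinearMap.proj i with hf
  have hset : {x : Fin n → ℝ | ∑ i, x i = 0} = (LinearMap.ker f : Set _) := by
    ext x; simp [hf, LinearMap.mem_ker, LinearMap.sum_apply]
  rw [hset]
  apply MeasureTheory.Measure.addHaar_submodule
  intro h
  have h1 : f (fun _ => 1) = 0 := by rw [LinearMap.ker_eq_top.mp h]; rfl
  simp [hf, LinearMap.sum_apply] at h1
  omega

lemma perblock (n : ℕ) (hn : 1 ≤ n) (μ : Measure (Fin n → ℝ)) [IsProbabilityMeasure μ]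
    (hac : μ ≪ volume) (hneg : Measure.map (fun x => -x) μ = μ) :
    (2:ℝ≥0∞)⁻¹ • Measure.map (phi n) μ
      + (2:ℝ≥0∞)⁻¹ • Measure.map (fun x => -x) (Measure.map (phi n) μ) = μ := by
  have hmP : MeasurableSet {x : Fin n → ℝ | 0 < ∑ i, x i} :=
    measurableSet_lt measurable_const (measurable_sumcoord n)
  have hmNg : MeasurableSet {x : Fin n → ℝ | ∑ i, x i < 0} :=
    measurableSet_lt (measurable_sumcoord n) measurable_const
  set P := {x : Fin n → ℝ | 0 < ∑ i, x i} with hPdef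
  set Ng := {x : Fin n → ℝ | ∑ i, x i < 0} with hNgdef
  have hneg_meas : Measurable (fun x : Fin n → ℝ => -x) := measurable_id.neg
  have hZ : μ {x : Fin n → ℝ | ∑ i, x i = 0} = 0 := hac (sumker_null n hn)
  have haeeq : Pᶜ =ᵐ[μ] Ng := by
    refine (MeasureTheory.ae_eq_set).mpr ?_
    constructor
    · refine measure_mono_null ?_ hZ
      intro x hx
      obtain ⟨h1, h2⟩ := hx
      have h1' : ¬ (0 < ∑ i, x i) := h1
      have h2' : ¬ (∑ i, x i < 0) := h2
      exact le_antisymm (not_lt.mp h1') (not_lt.mp h2')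
    · have : Ng \ Pᶜ = ∅ := by
        ext x
        simp only [Set.mem_diff, Set.mem_compl_iff, hPdef, hNgdef, Set.mem_setOf_eq, not_lt,
          Set.mem_empty_iff_false, iff_false, not_and, not_le]
        intro hx; exact le_of_lt hx
      exact (congrArg μ this).trans measure_empty
  have hsplit : μ.restrict P + μ.restrict Ng = μ := by
    rw [← Measure.restrict_congr_set haeeq]
    exact Measure.restrict_add_restrict_compl hmP
  have hmapP : Measure.map (phi n) (μ.restrict P) = μ.restrict P := by
    have : phi n =ᵐ[μ.restrict P] id := by
      filter_upwards [ae_restrict_mem hmP] with x hx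
      simp only [phi, if_pos (show 0 < ∑ i, x i from hx), id]
    rw [Measure.map_congr this, Measure.map_id]
  have hmapNg : Measure.map (phi n) (μ.restrict Ng) = Measure.map (fun x => -x) (μ.restrict Ng) := by
    have : phi n =ᵐ[μ.restrict Ng] (fun x => -x) := by
      filter_upwards [ae_restrict_mem hmNg] with x hx
      have hx' : ∑ i, x i < 0 := hx
      have h1 : ¬ (0 < ∑ i, x i) := not_lt.mpr (le_of_lt hx')
      have h2 : ¬ ((∑ i, x i) = 0) := ne_of_lt hx'
      simp only [phi, if_neg h1, if_neg h2]
    rw [Measure.map_congr this]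
  have hNgP : Ng = (fun x : Fin n → ℝ => -x) ⁻¹' P := by
    ext x; simp [hPdef, hNgdef]
  have hPNg : P = (fun x : Fin n → ℝ => -x) ⁻¹' Ng := by
    ext x; simp [hPdef, hNgdef]
  have hmapnegNg : Measure.map (fun x => -x) (μ.restrict Ng) = μ.restrict P := by
    rw [hNgP, ← Measure.restrict_map hneg_meas hmP, hneg]
  have hmapnegP : Measure.map (fun x => -x) (μ.restrict P) = μ.restrict Ng := by
    rw [hPNg, ← Measure.restrict_map hneg_meas hmNg, hneg]
  have hphi : Measure.map (phi n) μ = μ.restrict P + μ.restrict P := by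
    conv_lhs => rw [← hsplit]
    rw [Measure.map_add _ _ (measurable_phi n), hmapP, hmapNg, hmapnegNg]
  have hnegphi : Measure.map (fun x => -x) (Measure.map (phi n) μ)
      = μ.restrict Ng + μ.restrict Ng := by
    rw [hphi, Measure.map_add _ _ hneg_meas, hmapnegP]
  have h2 : ∀ ρ : Measure (Fin n → ℝ), (2:ℝ≥0∞)⁻¹ • ρ + (2:ℝ≥0∞)⁻¹ • ρ = ρ := by
    intro ρ
    rw [← add_smul, ENNReal.inv_two_add_inv_two, one_smul]
  rw [hnegphi, hphi, smul_add, smul_add, h2 (μ.restrict P), h2 (μ.restrict Ng), hsplit]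

lemma flipj_invol {L : ℕ} (j : Fin L) (v : Fin L → ℝ) : flipj j (flipj j v) = v := by
  funext ℓ; unfold flipj; by_cases h : ℓ = j <;> simp [h]

lemma flipj_mem_cubeF {L : ℕ} (j : Fin L) {v : Fin L → ℝ} (hv : v ∈ cubeF L) :
    flipj j v ∈ cubeF L := by
  rw [cubeF, Fintype.mem_piFinset] at hv ⊢
  intro ℓ
  unfold flipj
  by_cases h : ℓ = j
  · subst h
    have := hv ℓ
    simp only [Finset.mem_insert, Finset.mem_singleton] at this ⊢
    rcases this with h' | h' <;> rw [if_pos trivial, h'] <;> norm_num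
  · rw [if_neg h]; exact hv ℓ

lemma prod_flipj {L : ℕ} (j : Fin L) (v : Fin L → ℝ) :
    ∏ ℓ, flipj j v ℓ = - ∏ ℓ, v ℓ := by
  unfold flipj
  rw [← Finset.prod_erase_mul _ _ (Finset.mem_univ j), ← Finset.prod_erase_mul _ _ (Finset.mem_univ j)]
  rw [Finset.prod_congr rfl (fun ℓ hℓ => by
    rw [if_neg (Finset.ne_of_mem_erase hℓ)])]
  simp [mul_comm]

lemma prod_pm_one {L : ℕ} {v : Fin L → ℝ} (hv : v ∈ cubeF L) :
    ∏ ℓ, v ℓ = 1 ∨ ∏ ℓ, v ℓ = -1 := by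
  rw [cubeF, Fintype.mem_piFinset] at hv
  rw [← mul_self_eq_one_iff, ← Finset.prod_mul_distrib]
  apply Finset.prod_eq_one
  intro ℓ _
  have := hv ℓ
  simp at this
  rcases this with h | h <;> rw [h] <;> norm_num

lemma mem_UpsilonF {L : ℕ} {v : Fin L → ℝ} :
    v ∈ (cubeF L).filter (fun v => ∏ ℓ, v ℓ = -1) ↔ v ∈ Upsilon L := by
  rw [Finset.mem_filter, cubeF, Fintype.mem_piFinset]
  unfold Upsilon
  simp only [Set.mem_setOf_eq, Finset.mem_insert, Finset.mem_singleton]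

lemma Upsilon_finite (L : ℕ) : (Upsilon L).Finite := by
  apply Set.Finite.subset (cubeF L).finite_toSet
  intro x hx
  exact Finset.mem_coe.mpr ((Finset.mem_filter.mp (mem_UpsilonF.mpr hx)).1)

lemma Tj_fixed {L : ℕ} (j : Fin L) {v : Fin L → ℝ} (h : ∏ ℓ, v ℓ = -1) : Tj j v = v := by
  unfold Tj
  rw [if_neg]
  rw [h]; norm_num

lemma Tj_flip {L : ℕ} (j : Fin L) {v : Fin L → ℝ} (h : ∏ ℓ, v ℓ = 1) : Tj j v = flipj j v := by
  unfold Tj flipj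
  rw [if_pos]
  rw [h]; norm_num

lemma sum_cubeF_Tj {L : ℕ} (j : Fin L) (f : (Fin L → ℝ) → ℝ≥0∞) :
    ∑ v ∈ cubeF L, f (Tj j v) =
      ∑ y ∈ (cubeF L).filter (fun v => ∏ ℓ, v ℓ = -1), (f y + f y) := by
  rw [Finset.sum_add_distrib]
  rw [← Finset.sum_filter_add_sum_filter_not (cubeF L) (fun v => ∏ ℓ, v ℓ = -1) (fun v => f (Tj j v))]
  congr 1
  · apply Finset.sum_congr rfl
    intro v hv
    rw [Tj_fixed j (Finset.mem_filter.mp hv).2]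
  · apply Finset.sum_nbij' (flipj j) (flipj j)
    · intro v hv
      rw [Finset.mem_filter] at hv ⊢
      refine ⟨flipj_mem_cubeF j hv.1, ?_⟩
      rw [prod_flipj]
      rcases prod_pm_one hv.1 with h | h
      · rw [h]
      · exact absurd h hv.2
    · intro y hy
      rw [Finset.mem_filter] at hy ⊢
      refine ⟨flipj_mem_cubeF j hy.1, ?_⟩
      rw [prod_flipj, hy.2]
      norm_num
    · intro v _; exact flipj_invol j v
    · intro y _; exact flipj_invol j y
    · intro v hv
      rw [Finset.mem_filter] at hv
      rcases prod_pm_one hv.1 with h | h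
      · rw [Tj_flip j h]
      · exact absurd h hv.2

lemma map_Tj_Bsum (L : ℕ) (j : Fin L) : Measure.map (Tj j) (Bsum L) = nuL L := by
  classical
  have hL1 : 1 ≤ L := j.pos
  ext A hA
  rw [Measure.map_apply (measurable_Tj j) hA]
  rw [Bsum, Measure.finset_sum_apply]
  simp only [Measure.smul_apply, smul_eq_mul, Measure.dirac_apply, Set.indicator_apply,
    Set.mem_preimage, Pi.one_apply]
  rw [sum_cubeF_Tj j (fun y => ((2:ℝ≥0∞)^L)⁻¹ * (if y ∈ A then 1 else 0))]
  have hfinAU : (A ∩ Upsilon L).Finite := (Upsilon_finite L).subset Set.inter_subset_right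
  rw [nuL, Measure.smul_apply, smul_eq_mul, Measure.restrict_apply hA,
    Measure.count_apply_finite _ hfinAU]
  have hcard : hfinAU.toFinset = ((cubeF L).filter (fun v => ∏ ℓ, v ℓ = -1)).filter (· ∈ A) := by
    ext y
    rw [Set.Finite.mem_toFinset, Finset.mem_filter, mem_UpsilonF, Set.mem_inter_iff, and_comm]
  have hpow : (2:ℝ≥0∞)^L = 2 * 2^(L-1) := by
    conv_lhs => rw [show L = (L-1) + 1 from (Nat.succ_pred_eq_of_pos hL1).symm]
    rw [pow_succ, mul_comm]
  have hterm : ∀ c : ℝ≥0∞, ((2:ℝ≥0∞)^L)⁻¹ * c + ((2:ℝ≥0∞)^L)⁻¹ * c = ((2:ℝ≥0∞)^(L-1))⁻¹ * c := by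
    intro c
    rw [← two_mul, ← mul_assoc, hpow,
      ENNReal.mul_inv (Or.inl two_ne_zero) (Or.inl ENNReal.ofNat_ne_top), ← mul_assoc,
      ENNReal.mul_inv_cancel two_ne_zero ENNReal.ofNat_ne_top, one_mul]
  rw [Finset.sum_congr rfl (fun y _ => hterm _), ← Finset.mul_sum, Finset.sum_boole, hcard]

lemma KE (L n : ℕ) (hn : 1 ≤ n) (μ : Measure (Fin n → ℝ)) [IsProbabilityMeasure μ]
    (hac : μ ≪ volume) (hneg : Measure.map (fun x => -x) μ = μ) :
    Measure.map Phi
      ((Bsum L).prod (Measure.pi fun _ : Fin L => Measure.map (phi n) μ))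
      = Measure.pi (fun _ : Fin L => μ) := by
  classical
  haveI hmφ : IsProbabilityMeasure (Measure.map (phi n) μ) :=
    Measure.isProbabilityMeasure_map (measurable_phi n).aemeasurable
  set mφ := Measure.map (phi n) μ with hmφdef
  set M := Measure.pi (fun _ : Fin L => mφ) with hM
  symm
  apply Measure.pi_eq
  intro A hA
  have hSm : MeasurableSet (Set.pi Set.univ A) := MeasurableSet.univ_pi hA
  rw [Measure.map_apply measurable_Phi hSm, Measure.prod_apply (measurable_Phi hSm)]
  rw [Bsum, lintegral_finset_sum_measure]
  have hsec : ∀ v : Fin L → ℝ,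
      (Prod.mk v ⁻¹' (Phi ⁻¹' Set.pi Set.univ A))
        = Set.pi Set.univ (fun ℓ => (fun w : Fin n → ℝ => v ℓ • w) ⁻¹' A ℓ) := by
    intro v
    ext w
    simp [Phi, Set.mem_pi]
  set h : Fin L → ℝ → ℝ≥0∞ := fun ℓ c => mφ ((fun w : Fin n → ℝ => c • w) ⁻¹' A ℓ) with hh
  have hterm : ∀ v : Fin L → ℝ,
      ∫⁻ x, M (Prod.mk x ⁻¹' (Phi ⁻¹' Set.pi Set.univ A)) ∂(((2:ℝ≥0∞)^L)⁻¹ • Measure.dirac v)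
        = ((2:ℝ≥0∞)^L)⁻¹ * ∏ ℓ, h ℓ (v ℓ) := by
    intro v
    rw [lintegral_smul_measure, lintegral_dirac, hsec v, hM, Measure.pi_pi]
    rfl
  rw [Finset.sum_congr rfl (fun v _ => hterm v), ← Finset.mul_sum]
  rw [cubeF, ← Finset.prod_univ_sum (fun _ => ({1, -1} : Finset ℝ)) h]
  have hsum : ∀ ℓ, ∑ c ∈ ({1, -1} : Finset ℝ), h ℓ c = h ℓ 1 + h ℓ (-1) := by
    intro ℓ
    rw [Finset.sum_insert (by norm_num), Finset.sum_singleton]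
  rw [Finset.prod_congr rfl (fun ℓ _ => hsum ℓ)]
  have hμA : ∀ ℓ, μ (A ℓ) = 2⁻¹ * h ℓ 1 + 2⁻¹ * h ℓ (-1) := by
    intro ℓ
    conv_lhs => rw [← perblock n hn μ hac hneg]
    rw [Measure.add_apply, Measure.smul_apply, Measure.smul_apply, smul_eq_mul, smul_eq_mul]
    congr 2
    · rw [hh]
      congr 1
      ext w
      simp
    · have hnm : Measurable (fun x : Fin n → ℝ => -x) := Measurable.neg (measurable_id (α := Fin n → ℝ))
      rw [Measure.map_apply hnm (hA ℓ), hh]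
      congr 1
      ext w
      simp
  rw [Finset.prod_congr rfl (fun ℓ _ => hμA ℓ)]
  have : ∀ ℓ : Fin L, 2⁻¹ * h ℓ 1 + 2⁻¹ * h ℓ (-1) = 2⁻¹ * (h ℓ 1 + h ℓ (-1)) := fun ℓ => (mul_add _ _ _).symm
  rw [Finset.prod_congr rfl (fun ℓ _ => this ℓ), Finset.prod_mul_distrib, Finset.prod_const,
    Finset.card_univ, Fintype.card_fin, ← ENNReal.inv_pow]

lemma splice_apply {L n : ℕ} (x : Fin L → Fin n → ℝ) (ℓ : Fin L) (i : Fin n) :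
    splice x (finProdFinEquiv (ℓ, i)) = x ℓ i := by
  simp [splice, Equiv.symm_apply_apply]

lemma psi_Phi {L n : ℕ} (j : Fin L) (v : Fin L → ℝ) (w : Fin L → Fin n → ℝ)
    (hw : ∀ ℓ, 0 < ∑ i, w ℓ i) :
    psi L n j (splice (Phi (v, w))) = splice (Phi (Tj j v, w)) := by
  have hbs : ∀ ℓ : Fin L, ∑ i : Fin n, splice (Phi (v, w)) (finProdFinEquiv (ℓ, i))
      = v ℓ * ∑ i, w ℓ i := by
    intro ℓ
    rw [Finset.mul_sum]
    apply Finset.sum_congr rfl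
    intro i _
    rw [splice_apply]
    simp [Phi]
  have hprod : ∏ ℓ : Fin L, ∑ i : Fin n, splice (Phi (v, w)) (finProdFinEquiv (ℓ, i))
      = (∏ ℓ, v ℓ) * ∏ ℓ, ∑ i, w ℓ i := by
    rw [Finset.prod_congr rfl (fun ℓ _ => hbs ℓ), Finset.prod_mul_distrib]
  have hspos : 0 < ∏ ℓ, ∑ i, w ℓ i := Finset.prod_pos (fun ℓ _ => hw ℓ)
  by_cases hv : 0 < ∏ ℓ, v ℓ
  · have hcond : 0 < ∏ ℓ : Fin L, ∑ i : Fin n, splice (Phi (v, w)) (finProdFinEquiv (ℓ, i)) := by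
      rw [hprod]; exact mul_pos hv hspos
    rw [psi, if_pos hcond, Tj, if_pos hv]
    funext k
    obtain ⟨⟨ℓ, i⟩, hkk⟩ : ∃ p : Fin L × Fin n, k = finProdFinEquiv p :=
      ⟨finProdFinEquiv.symm k, (Equiv.apply_symm_apply _ _).symm⟩
    subst hkk
    by_cases hj : ℓ = j
    · simp [splice_apply, Equiv.symm_apply_apply, Phi, hj]
    · simp [splice_apply, Equiv.symm_apply_apply, Phi, hj]
  · have hcond : ¬ (0 < ∏ ℓ : Fin L, ∑ i : Fin n, splice (Phi (v, w)) (finProdFinEquiv (ℓ, i))) := by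
      rw [hprod]
      intro hcon
      rcases mul_pos_iff.mp hcon with ⟨h1, _⟩ | ⟨_, h2⟩
      · exact hv h1
      · exact absurd hspos (not_lt.mpr (le_of_lt h2))
    rw [psi, if_neg hcond, Tj, if_neg hv]

lemma step1 {Ω : Type*} [MeasurableSpace Ω] (P : Measure Ω) [IsProbabilityMeasure P]
    (L n : ℕ) (μ : Measure (Fin n → ℝ)) [IsProbabilityMeasure μ]
    (ζ : Fin L → Ω → Fin n → ℝ) (hζmeas : ∀ ℓ, Measurable (ζ ℓ))
    (hζindep : iIndepFun (m := fun _ : Fin L => MeasurableSpace.pi) ζ P)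
    (hζlaw : ∀ ℓ, Measure.map (ζ ℓ) P = μ) :
    Measure.map (fun ω => fun ℓ => ζ ℓ ω) P = Measure.pi (fun _ : Fin L => μ) := by
  symm
  apply Measure.pi_eq
  intro A hA
  rw [Measure.map_apply (measurable_pi_lambda _ hζmeas) (MeasurableSet.univ_pi hA)]
  have hpre : (fun ω => fun ℓ => ζ ℓ ω) ⁻¹' (Set.pi Set.univ A)
      = ⋂ ℓ ∈ Finset.univ, ζ ℓ ⁻¹' A (ℓ : Fin L) := by
    ext ω; simp [Set.mem_pi]
  rw [hpre, hζindep.measure_inter_preimage_eq_mul Finset.univ (fun ℓ _ => hA ℓ)]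
  apply Finset.prod_congr rfl
  intro ℓ _
  rw [← Measure.map_apply (hζmeas ℓ) (hA ℓ), hζlaw ℓ]

lemma map_phiv_pi (L n : ℕ) (μ : Measure (Fin n → ℝ)) [IsProbabilityMeasure μ] :
    Measure.map (fun w : Fin L → Fin n → ℝ => fun ℓ => phi n (w ℓ))
        (Measure.pi fun _ : Fin L => μ)
      = Measure.pi (fun _ : Fin L => Measure.map (phi n) μ) := by
  haveI : IsProbabilityMeasure (Measure.map (phi n) μ) :=
    Measure.isProbabilityMeasure_map (measurable_phi n).aemeasurable
  symm
  apply Measure.pi_eq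
  intro A hA
  have hPm : Measurable (fun w : Fin L → Fin n → ℝ => fun ℓ => phi n (w ℓ)) :=
    measurable_pi_lambda _ fun ℓ => (measurable_phi n).comp (measurable_pi_apply ℓ)
  rw [Measure.map_apply hPm (MeasurableSet.univ_pi hA)]
  have hpre : (fun w : Fin L → Fin n → ℝ => fun ℓ => phi n (w ℓ)) ⁻¹' (Set.pi Set.univ A)
      = Set.pi Set.univ (fun ℓ => phi n ⁻¹' A ℓ) := by
    ext w; simp [Set.mem_pi]
  rw [hpre, Measure.pi_pi]
  exact Finset.prod_congr rfl fun ℓ _ => (Measure.map_apply (measurable_phi n) (hA ℓ)).symm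

lemma pi_phi_ae (L n : ℕ) (hn : 1 ≤ n) (μ : Measure (Fin n → ℝ)) [IsProbabilityMeasure μ]
    (hac : μ ≪ volume) :
    (Measure.pi fun _ : Fin L => Measure.map (phi n) μ)
      {w : Fin L → Fin n → ℝ | ¬ ∀ ℓ, 0 < ∑ i, w ℓ i} = 0 := by
  haveI : IsProbabilityMeasure (Measure.map (phi n) μ) :=
    Measure.isProbabilityMeasure_map (measurable_phi n).aemeasurable
  set bad : Set (Fin n → ℝ) := {x | ¬ 0 < ∑ i, x i} with hbad
  have hμbad : Measure.map (phi n) μ bad = 0 := by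
    have hbm : MeasurableSet bad :=
      (measurableSet_lt measurable_const (measurable_sumcoord n)).compl
    rw [Measure.map_apply (measurable_phi n) hbm]
    apply measure_mono_null (t := {x : Fin n → ℝ | ∑ i, x i = 0})
    · intro x hx
      simp only [Set.mem_preimage, hbad, Set.mem_setOf_eq, not_lt] at hx
      by_contra hne
      rcases lt_or_gt_of_ne hne with hlt | hgt
      · have : phi n x = -x := by
          rw [phi, if_neg (not_lt.mpr (le_of_lt hlt)), if_neg (ne_of_lt hlt)]
        rw [this] at hx
        simp only [Pi.neg_apply, Finset.sum_neg_distrib] at hx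
        · exact absurd hx (not_le.mpr (by linarith))
      · have : phi n x = x := by rw [phi, if_pos hgt]
        rw [this] at hx
        exact absurd hx (not_le.mpr hgt)
    · exact hac (sumker_null n hn)
  have hsub : {w : Fin L → Fin n → ℝ | ¬ ∀ ℓ, 0 < ∑ i, w ℓ i}
      ⊆ ⋃ ℓ : Fin L, {w : Fin L → Fin n → ℝ | w ℓ ∈ bad} := by
    intro w hw
    push_neg at hw
    obtain ⟨ℓ, hℓ⟩ := hw
    exact Set.mem_iUnion.mpr ⟨ℓ, by simpa [hbad] using hℓ⟩
  apply measure_mono_null hsub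
  apply measure_iUnion_null
  intro ℓ
  have : {w : Fin L → Fin n → ℝ | w ℓ ∈ bad}
      = Set.pi Set.univ (fun ℓ' => if ℓ' = ℓ then bad else Set.univ) := by
    ext w
    simp only [Set.mem_setOf_eq, Set.mem_pi, Set.mem_univ, forall_true_left]
    constructor
    · intro h ℓ'
      by_cases h' : ℓ' = ℓ
      · subst h'; rw [if_pos rfl]; exact h
      · rw [if_neg h']; trivial
    · intro h
      have := h ℓ
      rwa [if_pos rfl] at this
  rw [this, Measure.pi_pi]
  calc ∏ ℓ' : Fin L, (Measure.map (phi n) μ) (if ℓ' = ℓ then bad else Set.univ)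
      = ∏ ℓ' : Fin L, (if ℓ' = ℓ then (0:ℝ≥0∞) else 1) := by
        apply Finset.prod_congr rfl
        intro ℓ' _
        by_cases h' : ℓ' = ℓ
        · rw [if_pos h', if_pos h', hμbad]
        · rw [if_neg h', if_neg h', measure_univ]
    _ = 0 := by
        rw [Finset.prod_ite_eq' Finset.univ ℓ (fun _ => (0:ℝ≥0∞))]
        simp

instance isFiniteMeasure_Bsum (L : ℕ) : IsFiniteMeasure (Bsum L) := by
  constructor
  rw [Bsum, Measure.finset_sum_apply]
  refine ENNReal.sum_lt_top.mpr ?_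
  intro v _
  rw [Measure.smul_apply, smul_eq_mul]
  exact ENNReal.mul_lt_top (ENNReal.inv_lt_top.mpr (by positivity)) (by simp)

instance isFiniteMeasure_nuL (L : ℕ) : IsFiniteMeasure (nuL L) := by
  constructor
  rw [nuL, Measure.smul_apply, smul_eq_mul, Measure.restrict_apply MeasurableSet.univ,
    Set.univ_inter, Measure.count_apply_finite _ (Upsilon_finite L)]
  exact ENNReal.mul_lt_top (ENNReal.inv_lt_top.mpr (by positivity)) (by simp)

end StmtAux

/-- Lemma 2.8(B): if `W = ⟨ζ^(0)|⋯|ζ^(L-1)⟩` with `ζ^(ℓ)` independent of law `μ`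
satisfying Condition `H(n)`, then `ψ_{n,j}(W)` has law `θ(μ)` for every `j`. -/
theorem stmt10 (L : ℕ) (hLeven : Even L) (hL6 : 6 ≤ L) (n : ℕ) (hn : 1 ≤ n)
    (μ : Measure (Fin n → ℝ)) [IsProbabilityMeasure μ] (hH : CondH L n μ)
    {Ω : Type*} [MeasurableSpace Ω] (P : Measure Ω) [IsProbabilityMeasure P]
    (ζ : Fin L → Ω → Fin n → ℝ) (hζmeas : ∀ ℓ, Measurable (ζ ℓ))
    (hζindep : iIndepFun (m := fun _ : Fin L => MeasurableSpace.pi) ζ P)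
    (hζlaw : ∀ ℓ, Measure.map (ζ ℓ) P = μ) :
    ∀ j : Fin L,
      Measure.map (fun ω => psi L n j (splice (fun ℓ => ζ ℓ ω))) P = theta L n μ := by
  intro j
  classical
  haveI hmφP : IsProbabilityMeasure (Measure.map (phi n) μ) :=
    Measure.isProbabilityMeasure_map (measurable_phi n).aemeasurable
  set M := Measure.pi (fun _ : Fin L => Measure.map (phi n) μ) with hMdef
  have hRmeas : Measurable (fun w : Fin L → Fin n → ℝ => psi L n j (splice w)) :=
    (measurable_psi L n j).comp measurable_splice
  have h1 : Measure.map (fun ω => psi L n j (splice (fun ℓ => ζ ℓ ω))) P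
      = Measure.map (fun w : Fin L → Fin n → ℝ => psi L n j (splice w))
          (Measure.map (fun ω => fun ℓ => ζ ℓ ω) P) := by
    rw [Measure.map_map hRmeas (measurable_pi_lambda _ hζmeas)]
    rfl
  rw [h1, step1 P L n μ ζ hζmeas hζindep hζlaw]
  rw [← KE L n hn μ hH.abs_cont hH.neg_inv]
  rw [Measure.map_map hRmeas measurable_Phi]
  have hmem : ∀ᵐ p ∂((Bsum L).prod M), ∀ ℓ, 0 < ∑ i, p.2 ℓ i := by
    rw [ae_iff]
    have hset : {p : (Fin L → ℝ) × (Fin L → Fin n → ℝ) | ¬ ∀ ℓ, 0 < ∑ i, p.2 ℓ i}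
        = Set.univ ×ˢ {w : Fin L → Fin n → ℝ | ¬ ∀ ℓ, 0 < ∑ i, w ℓ i} := by
      ext p; simp
    rw [hset, Measure.prod_prod, hMdef, pi_phi_ae L n hn μ hH.abs_cont, mul_zero]
  have hae : ((fun w : Fin L → Fin n → ℝ => psi L n j (splice w)) ∘ Phi)
      =ᵐ[(Bsum L).prod M]
        (fun p : (Fin L → ℝ) × (Fin L → Fin n → ℝ) => splice (Phi (Tj j p.1, p.2))) := by
    filter_upwards [hmem] with p hp
    exact psi_Phi j p.1 p.2 hp
  rw [Measure.map_congr hae]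
  have hcomp : (fun p : (Fin L → ℝ) × (Fin L → Fin n → ℝ) => splice (Phi (Tj j p.1, p.2)))
      = (fun q : (Fin L → ℝ) × (Fin L → Fin n → ℝ) => splice (Phi q)) ∘ (Prod.map (Tj j) id) := rfl
  have hSP : Measurable (fun q : (Fin L → ℝ) × (Fin L → Fin n → ℝ) => splice (Phi q)) :=
    measurable_splice.comp measurable_Phi
  rw [hcomp, ← Measure.map_map hSP ((measurable_Tj j).prodMap measurable_id)]
  rw [← Measure.map_prod_map _ _ (measurable_Tj j) measurable_id, Measure.map_id, map_Tj_Bsum]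
  unfold theta
  have hphiv : Measurable (fun w : Fin L → Fin n → ℝ => fun ℓ => phi n (w ℓ)) :=
    measurable_pi_lambda _ fun ℓ => (measurable_phi n).comp (measurable_pi_apply ℓ)
  have hF : (fun p : (Fin L → ℝ) × (Fin L → (Fin n → ℝ)) =>
        splice (fun ℓ => p.1 ℓ • phi n (p.2 ℓ)))
      = (fun q : (Fin L → ℝ) × (Fin L → Fin n → ℝ) => splice (Phi q))
          ∘ (Prod.map id (fun w ℓ => phi n (w ℓ))) := rfl
  rw [hF, ← Measure.map_map hSP (measurable_id.prodMap hphiv)]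
  rw [← Measure.map_prod_map _ _ measurable_id hphiv, Measure.map_id, map_phiv_pi]
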